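/- arXiv:2012.03304 — 2 statements merged into one kernel-verified Lean document; each statement's English description precedes it below -/
import Mathlib

section
/- An automorphism m of 𝔻 is irrotational if and only if there exists η ∈ 𝕋 such that m(η) = η and m(-η) = -η (where m is extended to the closed disc via the same Möbius formula). -/
/-!
On the closed disc the denominator `1 - ᾱz` never vanishes, so `m(z) = z` means
`τ (z - α) = z - ᾱ z²`. Subtracting this equation at `η` from the one at `-η` gives
`2η (τ - 1) = 0`. Conversely, for `τ = 1` both equations reduce to `ᾱ η² = α`, which
`η = α / |α|` (any `η` if `α = 0`) solves.
-/

open Complex ComplexConjugate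

noncomputable def mobius (α τ z : ℂ) : ℂ :=
  τ * ((z - α) / (1 - conj α * z))

theorem one_sub_conj_mul_ne_zero {α z : ℂ} (hα : ‖α‖ < 1) (hz : ‖z‖ ≤ 1) :
    1 - conj α * z ≠ 0 := by
  have : ‖conj α * z‖ < 1 := by
    rw [norm_mul, norm_conj]
    exact mul_lt_one_of_nonneg_of_lt_one_left (norm_nonneg α) hα hz
  rw [sub_ne_zero]
  rintro h
  simp [← h] at this

theorem mobius_eq_self_iff {α τ z : ℂ} (hden : 1 - conj α * z ≠ 0) :
    mobius α τ z = z ↔ τ * (z - α) = z - conj α * z ^ 2 := by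
  rw [mobius, ← mul_div_assoc, div_eq_iff hden]
  constructor <;> intro h <;> linear_combination h

theorem exists_norm_eq_one_conj_mul_sq_eq (α : ℂ) :
    ∃ η : ℂ, ‖η‖ = 1 ∧ conj α * η ^ 2 = α := by
  rcases eq_or_ne α 0 with rfl | hα
  · exact ⟨1, by simp, by simp⟩
  refine ⟨(‖α‖⁻¹ : ℂ) • α, norm_smul_inv_norm hα, ?_⟩
  have hnorm : (‖α‖ : ℂ) ≠ 0 := by exact_mod_cast norm_ne_zero_iff.mpr hα
  rw [smul_eq_mul]
  field_simp
  linear_combination mul_conj' α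

theorem irrotational_iff_antipodal_fixed_points_general (α τ : ℂ) (hα : ‖α‖ < 1) :
    τ = 1 ↔
      ∃ η : ℂ, ‖η‖ = 1 ∧
        τ * ((η - α) / (1 - (starRingEnd ℂ) α * η)) = η ∧
        τ * ((-η - α) / (1 - (starRingEnd ℂ) α * (-η))) = -η := by
  change τ = 1 ↔ ∃ η : ℂ, ‖η‖ = 1 ∧ mobius α τ η = η ∧ mobius α τ (-η) = -η
  have fixed_iff : ∀ η : ℂ, ‖η‖ = 1 → (mobius α τ η = η ↔ τ * (η - α) = η - conj α * η ^ 2) :=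
    fun η hη ↦ mobius_eq_self_iff (one_sub_conj_mul_ne_zero hα hη.le)
  constructor
  · rintro rfl
    obtain ⟨η, hη, hsq⟩ := exists_norm_eq_one_conj_mul_sq_eq α
    have hη' : ‖-η‖ = 1 := by rwa [norm_neg]
    refine ⟨η, hη, (fixed_iff η hη).mpr ?_, (fixed_iff (-η) hη').mpr ?_⟩ <;>
      linear_combination hsq
  · rintro ⟨η, hη, hfix, hfix_neg⟩
    rw [fixed_iff η hη] at hfix
    rw [fixed_iff (-η) (by rwa [norm_neg])] at hfix_neg
    have hη0 : η ≠ 0 := norm_ne_zero_iff.mp (by rw [hη]; exact one_ne_zero)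
    have : (2 * η) * (τ - 1) = 0 := by linear_combination hfix - hfix_neg
    simpa [hη0, sub_eq_zero] using this

theorem irrotational_iff_antipodal_fixed_points (α τ : ℂ) (hα : ‖α‖ < 1)
    (hτ : ‖τ‖ = 1) :
    τ = 1 ↔
      ∃ η : ℂ, ‖η‖ = 1 ∧
        τ * ((η - α) / (1 - (starRingEnd ℂ) α * η)) = η ∧
        τ * ((-η - α) / (1 - (starRingEnd ℂ) α * (-η))) = -η :=
  irrotational_iff_antipodal_fixed_points_general α τ hα
end

section
/- For any α ∈ 𝔻, the composition b_α ∘ b_α equals b_β where β = 2α/(1 + |α|²); in particular β ∈ 𝔻, so the composition of an irrotational automorphism with itself is irrotational. -/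
/-!
Writing `b_α(z) - α` and `1 - ᾱ b_α(z)` over the common denominator `1 - ᾱ z` and using `ᾱ α = |α|²`
gives `b_α(b_α(z)) = ((1 + |α|²) z - 2α) / ((1 + |α|²) - 2ᾱ z)`, which is `b_β(z)` after dividing by
the real number `1 + |α|²`. That `|β| = 2|α| / (1 + |α|²) < 1` is `(1 - |α|)² > 0`.
-/

open Complex ComplexConjugate

noncomputable section

namespace Complex

def blaschke (a z : ℂ) : ℂ :=
  (z - a) / (1 - conj a * z)

def blaschkeDouble (a : ℂ) : ℂ :=
  2 * a / (1 + (‖a‖ : ℂ) ^ 2)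

lemma one_add_norm_sq_ne_zero (a : ℂ) : (1 : ℂ) + (‖a‖ : ℂ) ^ 2 ≠ 0 := by
  exact_mod_cast (by positivity : (1 : ℝ) + ‖a‖ ^ 2 ≠ 0)

lemma norm_blaschkeDouble (a : ℂ) : ‖blaschkeDouble a‖ = 2 * ‖a‖ / (1 + ‖a‖ ^ 2) := by
  have hreal : (1 : ℂ) + (‖a‖ : ℂ) ^ 2 = ((1 + ‖a‖ ^ 2 : ℝ) : ℂ) := by push_cast; rfl
  rw [blaschkeDouble, hreal, norm_div, norm_mul, norm_real, Real.norm_of_nonneg (by positivity),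
    Complex.norm_two]

lemma norm_blaschkeDouble_lt_one {a : ℂ} (ha : ‖a‖ ≠ 1) : ‖blaschkeDouble a‖ < 1 := by
  rw [norm_blaschkeDouble, div_lt_one (by positivity)]
  nlinarith [sq_pos_of_ne_zero (sub_ne_zero.mpr ha)]

lemma conj_blaschkeDouble (a : ℂ) : conj (blaschkeDouble a) = 2 * conj a / (1 + (‖a‖ : ℂ) ^ 2) := by
  simp [blaschkeDouble, map_div₀, map_ofNat, conj_ofReal]

lemma one_sub_conj_mul_ne_zero {a z : ℂ} (h : ‖a‖ * ‖z‖ < 1) : 1 - conj a * z ≠ 0 := by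
  rw [sub_ne_zero]
  intro heq
  have := congrArg norm heq
  rw [norm_one, norm_mul, norm_conj] at this
  linarith

lemma blaschke_blaschke {a z : ℂ} (h₁ : 1 - conj a * z ≠ 0)
    (h₂ : 1 - conj (blaschkeDouble a) * z ≠ 0) :
    blaschke a (blaschke a z) = blaschke (blaschkeDouble a) z := by
  have hc := one_add_norm_sq_ne_zero a
  have hnorm : conj a * a = (‖a‖ : ℂ) ^ 2 := by rw [mul_comm, mul_conj']
  rw [conj_blaschkeDouble] at h₂
  have h₂' : 1 + (‖a‖ : ℂ) ^ 2 - 2 * conj a * z ≠ 0 := by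
    rwa [← mul_div_right_comm, one_sub_div hc, div_ne_zero_iff, and_iff_left hc] at h₂
  have hnum : blaschke a z - a = ((1 + (‖a‖ : ℂ) ^ 2) * z - 2 * a) / (1 - conj a * z) := by
    rw [blaschke, div_sub' h₁]
    linear_combination (z / (1 - conj a * z)) * hnorm
  have hden : 1 - conj a * blaschke a z =
      (1 + (‖a‖ : ℂ) ^ 2 - 2 * conj a * z) / (1 - conj a * z) := by
    rw [blaschke, mul_div_assoc', one_sub_div h₁]
    linear_combination (1 / (1 - conj a * z)) * hnorm
  calc blaschke a (blaschke a z)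
      = ((1 + (‖a‖ : ℂ) ^ 2) * z - 2 * a) / (1 + (‖a‖ : ℂ) ^ 2 - 2 * conj a * z) := by
        rw [blaschke, hnum, hden, div_div_div_cancel_right₀ h₁]
    _ = blaschke (blaschkeDouble a) z := by
        rw [blaschke, conj_blaschkeDouble, blaschkeDouble, div_eq_div_iff h₂' h₂]
        field_simp

end Complex

end

theorem blaschke_self_comp (α : ℂ) (hα : ‖α‖ < 1) :
    ‖2 * α / (1 + (‖α‖ : ℂ) ^ 2)‖ < 1 ∧
    ∀ z : ℂ, ‖z‖ < 1 →
      (((z - α) / (1 - (starRingEnd ℂ) α * z)) - α) /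
          (1 - (starRingEnd ℂ) α * ((z - α) / (1 - (starRingEnd ℂ) α * z))) =
        (z - 2 * α / (1 + (‖α‖ : ℂ) ^ 2)) /
          (1 - (starRingEnd ℂ) (2 * α / (1 + (‖α‖ : ℂ) ^ 2)) * z) := by
  have hβ : ‖blaschkeDouble α‖ < 1 := norm_blaschkeDouble_lt_one hα.ne
  refine ⟨hβ, fun z hz => blaschke_blaschke ?_ ?_⟩
  · exact one_sub_conj_mul_ne_zero (mul_lt_one_of_nonneg_of_lt_one_left (norm_nonneg _) hα hz.le)
  · exact one_sub_conj_mul_ne_zero (mul_lt_one_of_nonneg_of_lt_one_left (norm_nonneg _) hβ hz.le)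
end
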